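/- If σ and π are permutations with the same number of descents and σ ≤ π in pattern containment order, then f(σ) ≤ f(π) in subword order. -/

import Mathlib

/-- Two lists of naturals are order-isomorphic: same length and same relative order. -/
def OrdIso (a b : List ℕ) : Prop :=
  a.length = b.length ∧
    ∀ i, i < a.length → ∀ j, j < a.length →
      (a.getD i 0 < a.getD j 0 ↔ b.getD i 0 < b.getD j 0)

instance (a b : List ℕ) : Decidable (OrdIso a b) := by unfold OrdIso; infer_instance

/-- `σ` occurs as a pattern in `π`: some subsequence of `π` is order-isomorphic to `σ`. -/
def occursIn (σ π : List ℕ) : Prop := ∃ s ∈ π.sublists, OrdIso σ s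

instance (σ π : List ℕ) : Decidable (occursIn σ π) := by unfold occursIn; infer_instance

/-- `l` is a permutation of `1, …, l.length`. -/
def IsPermList (l : List ℕ) : Prop := l.Perm ((List.range l.length).map (· + 1))

/-- The number of descents of `l` (positions `i` with `l i > l (i+1)`, 0-based). -/
def des (l : List ℕ) : ℕ :=
  ((List.range (l.length - 1)).filter (fun i => decide (l.getD (i+1) 0 < l.getD i 0))).length

/-- `d_π(c)`: one plus the number of descents of `π` preceding the letter `c`. -/
def dval (l : List ℕ) (c : ℕ) : ℕ :=
  1 + ((List.range (l.idxOf c)).filter (fun i => decide (l.getD (i+1) 0 < l.getD i 0))).length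

/-- The word `f(π) = d_π(1) d_π(2) ⋯ d_π(n)`. -/
def fword (l : List ℕ) : List ℕ := (List.range l.length).map (fun i => dval l (i+1))

/-- The largest letter of the word `w`. -/
def maxLetter (w : List ℕ) : ℕ := w.foldr max 0

/-- `p_w(j)`: positions (1-based, increasing) of the letter `j` in `w`. -/
def posList (w : List ℕ) (j : ℕ) : List ℕ :=
  ((List.range w.length).filter (fun i => decide (w.getD i 0 = j))).map (· + 1)

/-- `g(w)`: the concatenation of the position lists `p_w(1), …, p_w(max w)`. -/
def gperm (w : List ℕ) : List ℕ := (List.range (maxLetter w)).flatMap (fun j => posList w (j+1))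

/-- Membership in the poset 𝒜̂: positive letters, every letter in `{1,…,max w}` occurs,
and the rightmost occurrence of each `i < max w` is preceded by an occurrence of `i+1`. -/
def InAhat (w : List ℕ) : Prop :=
  (∀ x ∈ w, 1 ≤ x) ∧
  (∀ i, i < maxLetter w → i + 1 ∈ w) ∧
  (∀ i, i < maxLetter w - 1 → ∃ t, t < w.length ∧ w.getD t 0 = i + 1 ∧
     (∀ s, s < w.length → t < s → w.getD s 0 ≠ i + 1) ∧ ∃ u, u < t ∧ w.getD u 0 = i + 2)

instance (w : List ℕ) : Decidable (InAhat w) := by unfold InAhat; infer_instance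

/-- All permutations (as lists on `1..k`) of every length `k ≤ n`. -/
def permsUpTo (n : ℕ) : List (List ℕ) :=
  (List.range (n+1)).flatMap (fun k => ((List.range k).map (· + 1)).permutations)

/-- The interval `[a,b]` in the pattern containment poset, as a list. -/
def intervalList (a b : List ℕ) : List (List ℕ) :=
  (permsUpTo b.length).filter (fun z => decide (occursIn a z ∧ occursIn z b))

/-- `μ` is the Möbius function of the poset of permutations under pattern containment:
`μ(a,a) = 1` and, for `a < b`, `∑_{a ≤ z ≤ b} μ(a,z) = 0`. -/
def MoebiusOn (μ : List ℕ → List ℕ → ℤ) : Prop :=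
  (∀ a, μ a a = 1) ∧
  ∀ a b, IsPermList a → IsPermList b → occursIn a b → a ≠ b →
    ((intervalList a b).map (μ a)).sum = 0

/-- All lists of length `n` with entries in `{0, …, k-1}`. -/
def listsOf (n k : ℕ) : List (List ℕ) :=
  (List.range n).foldr (fun _ acc => (List.range k).flatMap (fun a => acc.map (a :: ·))) [[]]

/-- The letters of `π` in the nonzero positions of `η`. -/
def embOcc (η π : List ℕ) : List ℕ :=
  ((List.range π.length).filter (fun i => decide (η.getD i 0 ≠ 0))).map (fun i => π.getD i 0)

/-- `η` is an embedding of `σ` in `π`: a sequence of length `|π|` whose nonzero positions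
are the positions of an occurrence of `σ` in `π` and whose nonzero letters spell `σ`. -/
def IsEmbedding (η σ π : List ℕ) : Prop :=
  η.length = π.length ∧ η.filter (fun x => decide (x ≠ 0)) = σ ∧ OrdIso σ (embOcc η π)

/-- `η` is a normal embedding: nonzero at every letter of `π` lying in the tail of an
adjacency (i.e. every position whose predecessor holds the previous value). -/
def IsNormalEmbedding (η σ π : List ℕ) : Prop :=
  IsEmbedding η σ π ∧
    ∀ i, i < π.length → 0 < i → π.getD i 0 = π.getD (i-1) 0 + 1 → η.getD i 0 ≠ 0

instance (η σ π : List ℕ) : Decidable (IsNormalEmbedding η σ π) := by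
  unfold IsNormalEmbedding IsEmbedding; infer_instance

/-- The number of normal embeddings of `σ` in `π`. -/
def normalCount (σ π : List ℕ) : ℕ :=
  ((listsOf π.length (σ.length + 1)).filter (fun η => decide (IsNormalEmbedding η σ π))).length

/-- The total number of letters in all tails of all adjacencies of `π`;
equivalently, the number of adjacency pairs of `π`. -/
def tailCount (π : List ℕ) : ℕ :=
  ((List.range π.length).filter (fun i => decide (0 < i ∧ π.getD i 0 = π.getD (i-1) 0 + 1))).length

/-- The number of occurrences of `σ` as a pattern in `π`. -/
def occCount (σ π : List ℕ) : ℕ :=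
  ((List.range π.length).sublists.filter
    (fun s => decide (OrdIso σ (s.map (fun i => π.getD i 0))))).length

/-- All words of length `n` on the alphabet `{1, …, k}`. -/
def wordsOf (n k : ℕ) : List (List ℕ) := (listsOf n k).map (List.map (· + 1))

/-- All permutations of `1, …, n`, as lists. -/
def permsOfLen (n : ℕ) : List (List ℕ) := ((List.range n).map (· + 1)).permutations

/-!
Fix an occurrence of `σ` in `π` at positions `G 0 < G 1 < ⋯`. A descent of `σ` at `t` forces a
descent of `π` somewhere in `[G t, G (t+1))`, so between two positions of the occurrence `π` has
at least as many descents as `σ`. Applying this from the first position to `j` and from `j` to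
the last one, and using that `σ` and `π` have the same number of descents, the number of descents
of `π` before `G j` is exactly that of `σ` before `j`. Hence each letter `x` of `σ` gets the same
value in `f` as the letter of `π` matched with it; as the matching is increasing in `x`, `f(σ)` is
the subword of `f(π)` at the matched letters.
-/

def descentsBefore (l : List ℕ) (m : ℕ) : ℕ :=
  ((List.range m).filter (fun i => decide (l.getD (i+1) 0 < l.getD i 0))).length

theorem des_eq_descentsBefore (l : List ℕ) : des l = descentsBefore l (l.length - 1) := rfl

theorem dval_eq_descentsBefore (l : List ℕ) (c : ℕ) :
    dval l c = 1 + descentsBefore l (l.idxOf c) := rfl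

theorem descentsBefore_zero (l : List ℕ) : descentsBefore l 0 = 0 := rfl

theorem descentsBefore_mono (l : List ℕ) : Monotone (descentsBefore l) := fun _ _ h =>
  ((List.range_sublist.mpr h).filter _).length_le

theorem descentsBefore_succ (l : List ℕ) (m : ℕ) :
    descentsBefore l (m+1) =
      descentsBefore l m + if l.getD (m+1) 0 < l.getD m 0 then 1 else 0 := by
  unfold descentsBefore
  rw [List.range_succ, List.filter_append, List.length_append]
  by_cases h : l.getD (m+1) 0 < l.getD m 0 <;>
    simp only [List.filter_singleton, h, decide_true, decide_false, cond_true, cond_false,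
      if_true, if_false, List.length_singleton, List.length_nil]

theorem descentsBefore_lt_of_getD_lt (l : List ℕ) {a b : ℕ} (hab : a < b)
    (h : l.getD b 0 < l.getD a 0) : descentsBefore l a < descentsBefore l b := by
  induction b, hab using Nat.le_induction with
  | base => rw [descentsBefore_succ, if_pos h]; omega
  | succ b hab ih =>
    rw [descentsBefore_succ]
    by_cases hd : l.getD (b+1) 0 < l.getD b 0
    · rw [if_pos hd]
      have := descentsBefore_mono l (by omega : a ≤ b)
      omega
    · rw [if_neg hd]
      exact (ih (by omega)).trans_le (Nat.le_add_right _ _)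

theorem IsPermList.perm_range' {l : List ℕ} (h : IsPermList l) :
    l.Perm (List.range' 1 l.length) := by
  simpa only [IsPermList, List.range'_eq_map_range, Nat.add_comm 1] using h

theorem IsPermList.nodup {l : List ℕ} (h : IsPermList l) : l.Nodup :=
  h.perm_range'.nodup_iff.mpr List.nodup_range'

theorem fword_eq_map_range' (l : List ℕ) : fword l = (List.range' 1 l.length).map (dval l) := by
  simp only [fword, List.range'_eq_map_range, List.map_map, Function.comp_def, Nat.add_comm 1]

structure IsOccurrence (σ π : List ℕ) (G : ℕ → ℕ) : Prop where
  strictMono : StrictMono G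
  lt_length : ∀ i < σ.length, G i < π.length
  lt_iff_lt : ∀ i < σ.length, ∀ j < σ.length,
    σ.getD i 0 < σ.getD j 0 ↔ π.getD (G i) 0 < π.getD (G j) 0

theorem exists_isOccurrence_of_occursIn {σ π : List ℕ} (h : occursIn σ π) :
    ∃ G, IsOccurrence σ π G := by
  obtain ⟨s, hs, hiso⟩ := h
  obtain ⟨G, hG⟩ :=
    List.sublist_iff_exists_orderEmbedding_getElem?_eq.mp (List.mem_sublists.mp hs)
  refine ⟨G, G.strictMono, fun i hi => ?_, fun i hi j hj => ?_⟩
  · have : s[i]?.isSome := by simp [← hiso.1, hi]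
    rw [hG] at this
    simpa using this
  · rw [hiso.2 i hi j hj]
    simp only [List.getD_eq_getElem?_getD, hG]

def matchedLetter (σ π : List ℕ) (G : ℕ → ℕ) (x : ℕ) : ℕ := π.getD (G (σ.idxOf x)) 0

namespace IsOccurrence

variable {σ π : List ℕ} {G : ℕ → ℕ}

theorem descentsBefore_add_le (hG : IsOccurrence σ π G) {j j' : ℕ} (hjj' : j ≤ j')
    (hj' : j' < σ.length) :
    descentsBefore σ j' + descentsBefore π (G j) ≤
      descentsBefore π (G j') + descentsBefore σ j := by
  induction j', hjj' using Nat.le_induction with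
  | base => exact (Nat.add_comm _ _).le
  | succ j' hjj' ih =>
    have ih := ih (by omega)
    have hGlt := hG.strictMono (Nat.lt_add_one j')
    rw [descentsBefore_succ]
    split_ifs with hσ
    · have := descentsBefore_lt_of_getD_lt π hGlt ((hG.lt_iff_lt _ hj' _ (by omega)).mp hσ)
      omega
    · have := descentsBefore_mono π hGlt.le
      omega

theorem descentsBefore_eq_of_des_eq (hG : IsOccurrence σ π G) (hdes : des σ = des π) {j : ℕ}
    (hj : j < σ.length) : descentsBefore π (G j) = descentsBefore σ j := by
  have hlower := hG.descentsBefore_add_le (Nat.zero_le j) hj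
  have hupper := hG.descentsBefore_add_le (Nat.le_sub_one_of_lt hj) (by omega)
  have hend : descentsBefore π (G (σ.length - 1)) ≤ des π :=
    descentsBefore_mono π (Nat.le_sub_one_of_lt (hG.lt_length _ (by omega)))
  rw [descentsBefore_zero] at hlower
  rw [des_eq_descentsBefore σ] at hdes
  omega

theorem matchedLetter_mem (hG : IsOccurrence σ π G) {x : ℕ} (hx : x ∈ σ) :
    matchedLetter σ π G x ∈ π := by
  rw [matchedLetter, List.getD_eq_getElem _ _ (hG.lt_length _ (List.idxOf_lt_length_iff.mpr hx))]
  exact List.getElem_mem _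

theorem matchedLetter_lt_matchedLetter (hG : IsOccurrence σ π G) {x y : ℕ} (hx : x ∈ σ)
    (hy : y ∈ σ) (hxy : x < y) : matchedLetter σ π G x < matchedLetter σ π G y := by
  have hi := List.idxOf_lt_length_iff.mpr hx
  have hj := List.idxOf_lt_length_iff.mpr hy
  rw [matchedLetter, matchedLetter, ← hG.lt_iff_lt _ hi _ hj, List.getD_eq_getElem _ _ hi,
    List.getD_eq_getElem _ _ hj, List.getElem_idxOf, List.getElem_idxOf]
  exact hxy

theorem dval_matchedLetter (hG : IsOccurrence σ π G) (hπ : π.Nodup) (hdes : des σ = des π)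
    {x : ℕ} (hx : x ∈ σ) : dval π (matchedLetter σ π G x) = dval σ x := by
  have hi := List.idxOf_lt_length_iff.mpr hx
  have hGi := hG.lt_length _ hi
  rw [matchedLetter, dval_eq_descentsBefore, dval_eq_descentsBefore, List.getD_eq_getElem _ _ hGi,
    hπ.idxOf_getElem _ hGi, hG.descentsBefore_eq_of_des_eq hdes hi]

theorem map_matchedLetter_sublist (hG : IsOccurrence σ π G) (hσ : IsPermList σ)
    (hπ : IsPermList π) :
    List.Sublist ((List.range' 1 σ.length).map (matchedLetter σ π G))
      (List.range' 1 π.length) := by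
  have hmem (x : ℕ) (hx : x ∈ List.range' 1 σ.length) : x ∈ σ :=
    hσ.perm_range'.mem_iff.mpr hx
  have hsorted : ((List.range' 1 σ.length).map (matchedLetter σ π G)).Pairwise (· < ·) :=
    List.pairwise_map.mpr <| (List.pairwise_lt_range' 1).imp_of_mem fun hx hy hxy =>
      hG.matchedLetter_lt_matchedLetter (hmem _ hx) (hmem _ hy) hxy
  refine List.sublist_of_subperm_of_pairwise (List.subperm_of_subset hsorted.nodup ?_) hsorted
    List.pairwise_lt_range'
  intro y hy
  obtain ⟨x, hx, rfl⟩ := List.mem_map.mp hy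
  exact hπ.perm_range'.mem_iff.mp (hG.matchedLetter_mem (hmem x hx))

theorem fword_eq_map_map_matchedLetter (hG : IsOccurrence σ π G) (hσ : IsPermList σ)
    (hπ : π.Nodup) (hdes : des σ = des π) :
    fword σ = ((List.range' 1 σ.length).map (matchedLetter σ π G)).map (dval π) := by
  rw [fword_eq_map_range', List.map_map]
  exact List.map_congr_left fun x hx =>
    (hG.dval_matchedLetter hπ hdes (hσ.perm_range'.mem_iff.mpr hx)).symm

end IsOccurrence

/-- if `σ ≤ π` in pattern order and they have the same number of descents,
then `f(σ) ≤ f(π)` in subword order. -/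
theorem fword_sublist (σ π : List ℕ) (hσ : IsPermList σ) (hπ : IsPermList π)
    (hdes : des σ = des π) (h : occursIn σ π) :
    List.Sublist (fword σ) (fword π) := by
  obtain ⟨G, hG⟩ := exists_isOccurrence_of_occursIn h
  rw [hG.fword_eq_map_map_matchedLetter hσ hπ.nodup hdes, fword_eq_map_range' π]
  exact (hG.map_matchedLetter_sublist hσ hπ).map _
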